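/- The completely ineffable ideal is a fixed point of the ineffability operator: let κ be completely ineffable, let T be the union of all stationary classes witnessing complete ineffability of κ, and let I = P(κ) \ T. Then I is an ideal on κ and I(I) = I, where I(·) is the ineffability operator. -/
import Mathlib


open Set

/-- `C` is unbounded in `δ`. -/
def UnbIn (δ : Ordinal) (C : Set Ordinal) : Prop :=
  ∀ β < δ, ∃ γ ∈ C, β ≤ γ ∧ γ < δ

/-- `C` is a club (closed unbounded) subset of `κ`. -/
def IsClubIn (κ : Ordinal) (C : Set Ordinal) : Prop :=
  C ⊆ Set.Iio κ ∧ UnbIn κ C ∧ ∀ α < κ, α ≠ 0 → UnbIn α C → α ∈ C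

/-- `a` is an `A`-list: `a α ⊆ α` for all `α ∈ A`. -/
def IsList (A : Set Ordinal) (a : Ordinal → Set Ordinal) : Prop :=
  ∀ α ∈ A, a α ⊆ Set.Iio α

/-- `H` is homogeneous for the list `a`. -/
def Homog (a : Ordinal → Set Ordinal) (H : Set Ordinal) : Prop :=
  ∀ α ∈ H, ∀ β ∈ H, α < β → a α = a β ∩ Set.Iio α

/-- `κ` is (the ordinal of) a regular uncountable cardinal. -/
def RegUncountable (κ : Ordinal) : Prop :=
  κ.card.ord = κ ∧ κ.card.IsRegular ∧ Cardinal.aleph0 < κ.card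

/-- `S ⊆ κ` is subtle: every `S`-list and club admit a coherent pair. -/
def Subtle (κ : Ordinal) (S : Set Ordinal) : Prop :=
  S ⊆ Set.Iio κ ∧ ∀ a, IsList S a → ∀ C, IsClubIn κ C →
    ∃ α ∈ S ∩ C, ∃ β ∈ S ∩ C, α < β ∧ a α = a β ∩ Set.Iio α

/-- `S` is stationary in `κ`. -/
def StatIn (κ : Ordinal) (S : Set Ordinal) : Prop :=
  S ⊆ Set.Iio κ ∧ ∀ C, IsClubIn κ C → (S ∩ C).Nonempty

/-- A stationary class on `κ` witnessing complete ineffability: a collection of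
stationary sets closed under supersets such that every list on a member has a
homogeneous subset in the collection. -/
structure WitnessingClass (κ : Ordinal) (𝒮 : Set (Set Ordinal)) : Prop where
  stat : ∀ S ∈ 𝒮, StatIn κ S
  superset : ∀ S ∈ 𝒮, ∀ T, S ⊆ T → T ⊆ Set.Iio κ → T ∈ 𝒮
  homog : ∀ S ∈ 𝒮, ∀ a, IsList S a → ∃ H ∈ 𝒮, H ⊆ S ∧ Homog a H

/-- An ideal on `κ`: extends the bounded ideal, closed under subsets and finite unions. -/
structure IsIdealOn (κ : Ordinal) (I : Set (Set Ordinal)) : Prop where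
  subset_iio : ∀ A ∈ I, A ⊆ Set.Iio κ
  bounded_mem : ∀ A, A ⊆ Set.Iio κ → ¬ UnbIn κ A → A ∈ I
  mono : ∀ A ∈ I, ∀ B, B ⊆ A → B ∈ I
  union_mem : ∀ A ∈ I, ∀ B ∈ I, A ∪ B ∈ I

/-- The ineffability operator. -/
def IneffIdeal (κ : Ordinal) (I : Set (Set Ordinal)) : Set (Set Ordinal) :=
  {A | A ⊆ Set.Iio κ ∧
    ¬ ∀ a, IsList A a → ∃ H, H ⊆ A ∧ H ∉ I ∧ Homog a H}

/-- The union of all witnessing classes is itself a witnessing class. -/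
lemma witnessT (κ : Ordinal) :
    WitnessingClass κ {S | ∃ 𝒮, WitnessingClass κ 𝒮 ∧ S ∈ 𝒮} where
  stat := by rintro S ⟨𝒮, h𝒮, hS⟩; exact h𝒮.stat S hS
  superset := by
    rintro S ⟨𝒮, h𝒮, hS⟩ T hST hT
    exact ⟨𝒮, h𝒮, h𝒮.superset S hS T hST hT⟩
  homog := by
    rintro S ⟨𝒮, h𝒮, hS⟩ a ha
    obtain ⟨H, hH, hHS, hhom⟩ := h𝒮.homog S hS a ha
    exact ⟨H, ⟨𝒮, h𝒮, hH⟩, hHS, hhom⟩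

/-- The tail `{γ | b ≤ γ < κ}` is a club in `κ`. -/
lemma clubTail {κ b : Ordinal} (hb : b < κ) :
    IsClubIn κ {γ | b ≤ γ ∧ γ < κ} := by
  refine ⟨fun γ hγ => hγ.2, fun β hβ =>
    ⟨max b β, ⟨le_max_left _ _, max_lt hb hβ⟩, le_max_right _ _, max_lt hb hβ⟩,
    fun α hα hα0 hunb => ?_⟩
  obtain ⟨γ, hγ, _, hlt⟩ := hunb 0 (pos_iff_ne_zero.2 hα0)
  exact ⟨hγ.1.trans hlt.le, hα⟩

/-- The positive part of any club in `κ` is again a club (for `κ > 1`). -/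
lemma clubPos_inter {κ : Ordinal} (h1 : 1 < κ) {C : Set Ordinal} (hC : IsClubIn κ C) :
    IsClubIn κ ({γ | 0 < γ ∧ γ < κ} ∩ C) := by
  refine ⟨fun γ hγ => hγ.1.2, fun β hβ => ?_, fun α hα hα0 hunb => ?_⟩
  · obtain ⟨γ, hγC, hγle, hγlt⟩ := hC.2.1 (max β 1) (max_lt hβ h1)
    exact ⟨γ, ⟨⟨lt_of_lt_of_le zero_lt_one ((le_max_right β 1).trans hγle), hγlt⟩, hγC⟩,
      (le_max_left β 1).trans hγle, hγlt⟩
  · have hunbC : UnbIn α C := by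
      intro β hβ
      obtain ⟨γ, hγ, h1', h2⟩ := hunb β hβ
      exact ⟨γ, hγ.2, h1', h2⟩
    exact ⟨⟨pos_iff_ne_zero.2 hα0, hα⟩, hC.2.2 α hα hα0 hunbC⟩

/-- Members of the union of witnessing classes remain there after intersecting
with the club of positive ordinals. -/
lemma T_inter_pos {κ : Ordinal} (h1 : 1 < κ) {S : Set Ordinal}
    (hS : ∃ 𝒮, WitnessingClass κ 𝒮 ∧ S ∈ 𝒮) :
    ∃ 𝒮, WitnessingClass κ 𝒮 ∧ S ∩ {γ | 0 < γ ∧ γ < κ} ∈ 𝒮 := by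
  obtain ⟨𝒮, h𝒮, hS𝒮⟩ := hS
  set C0 : Set Ordinal := {γ | 0 < γ ∧ γ < κ} with hC0
  refine ⟨{S' | S' ⊆ Set.Iio κ ∧ ∃ S₀ ∈ 𝒮, S₀ ∩ C0 ⊆ S'}, ⟨?_, ?_, ?_⟩, ?_⟩
  · rintro S' ⟨hsub, S₀, hS₀, hsub2⟩
    refine ⟨hsub, fun C' hC' => ?_⟩
    obtain ⟨x, hxS₀, hxC0, hxC'⟩ := (h𝒮.stat S₀ hS₀).2 (C0 ∩ C') (clubPos_inter h1 hC')
    exact ⟨x, hsub2 ⟨hxS₀, hxC0⟩, hxC'⟩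
  · rintro S' ⟨hsub, S₀, hS₀, hsub2⟩ T hS'T hT
    exact ⟨hT, S₀, hS₀, hsub2.trans hS'T⟩
  · rintro S' ⟨hsub, S₀, hS₀, hsub2⟩ a ha
    set b : Ordinal → Set Ordinal := fun α => a α ∩ Set.Iio α with hbdef
    have hb : IsList S₀ b := fun α _ => inter_subset_right
    obtain ⟨H, hH𝒮, hHS₀, hhom⟩ := h𝒮.homog S₀ hS₀ b hb
    have hkey : ∀ α ∈ H ∩ C0, a α = b α := by
      rintro α ⟨hαH, hαC0⟩
      have : α ∈ S' := hsub2 ⟨hHS₀ hαH, hαC0⟩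
      exact (inter_eq_left.2 (ha α this)).symm
    refine ⟨H ∩ C0, ⟨fun γ hγ => hγ.2.2, H, hH𝒮, subset_rfl⟩,
      fun γ hγ => hsub2 ⟨hHS₀ hγ.1, hγ.2⟩, ?_⟩
    intro α hα β hβ hαβ
    rw [hkey α hα, hkey β hβ, hhom α hα.1 β hβ.1 hαβ]
  · exact ⟨fun γ hγ => hγ.2.2, S, hS𝒮, subset_rfl⟩

/-- The completely ineffable ideal is a fixed point of the ineffability operator:
with `T` the union of all witnessing classes and `I = P(κ) \ T`, `I` is an ideal
on `κ` and `𝓘(I) = I`. -/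
theorem completelyIneffableIdeal_fixedPoint (κ : Ordinal) (hκ : RegUncountable κ)
    (hci : ∃ 𝒮, WitnessingClass κ 𝒮 ∧ Set.Iio κ ∈ 𝒮)
    (T : Set (Set Ordinal))
    (hT : T = {S | ∃ 𝒮, WitnessingClass κ 𝒮 ∧ S ∈ 𝒮})
    (I : Set (Set Ordinal))
    (hI : I = {A | A ⊆ Set.Iio κ ∧ A ∉ T}) :
    IsIdealOn κ I ∧ IneffIdeal κ I = I := by
  classical
  subst hT hI
  have hW := witnessT κ
  have h1 : 1 < κ := by
    have hω : (Ordinal.omega0 : Ordinal) < κ := by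
      have := Cardinal.ord_lt_ord.2 hκ.2.2
      rwa [Cardinal.ord_aleph0, hκ.1] at this
    exact lt_trans Ordinal.one_lt_omega0 hω
  -- the structure of membership in I
  have memI : ∀ A : Set Ordinal,
      (A ∈ {A | A ⊆ Set.Iio κ ∧ A ∉ {S | ∃ 𝒮, WitnessingClass κ 𝒮 ∧ S ∈ 𝒮}}) ↔
      (A ⊆ Set.Iio κ ∧ A ∉ {S | ∃ 𝒮, WitnessingClass κ 𝒮 ∧ S ∈ 𝒮}) := fun A => Iff.rfl
  constructor
  · constructor
    · exact fun A hA => hA.1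
    · -- bounded sets are in I
      intro A hAsub hAunb
      refine ⟨hAsub, fun hAT => hAunb ?_⟩
      intro β hβ
      obtain ⟨x, hxA, hxb, hxκ⟩ := (hW.stat A hAT).2 {γ | β ≤ γ ∧ γ < κ} (clubTail hβ)
      exact ⟨x, hxA, hxb, hxκ⟩
    · intro A hA B hBA
      refine ⟨hBA.trans hA.1, fun hBT => hA.2 (hW.superset B hBT A hBA hA.1)⟩
    · -- union
      intro A hA B hB
      refine ⟨union_subset hA.1 hB.1, fun hU => ?_⟩
      set a : Ordinal → Set Ordinal := fun α => if α ∈ A then ∅ else Set.Iio α with hadef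
      have ha : IsList (A ∪ B) a := by
        intro α _
        by_cases h : α ∈ A <;> simp [hadef, h]
      obtain ⟨H, hHT, hHsub, hhom⟩ := hW.homog (A ∪ B) hU a ha
      have hH' := T_inter_pos h1 hHT
      set H' := H ∩ {γ | 0 < γ ∧ γ < κ} with hH'def
      by_cases hcase : H' ⊆ A
      · exact hA.2 (hW.superset H' hH' A hcase hA.1)
      · obtain ⟨α₀, hα₀H', hα₀A⟩ := not_subset.1 hcase
        have hHB : H' ⊆ B := by
          intro β hβ
          rcases hHsub hβ.1 with hβA | hβB
          · exfalso
            rcases lt_trichotomy α₀ β with h | h | h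
            · have heq := hhom α₀ hα₀H'.1 β hβ.1 h
              rw [hadef] at heq
              simp only [if_neg hα₀A, if_pos hβA, Set.empty_inter] at heq
              exact (Set.eq_empty_iff_forall_notMem.1 heq 0) hα₀H'.2.1
            · exact hα₀A (h ▸ hβA)
            · have heq := hhom β hβ.1 α₀ hα₀H'.1 h
              rw [hadef] at heq
              simp only [if_pos hβA, if_neg hα₀A] at heq
              have h0 : (0 : Ordinal) ∈ Set.Iio α₀ ∩ Set.Iio β :=
                ⟨hα₀H'.2.1, hβ.2.1⟩
              rw [← heq] at h0
              exact h0
          · exact hβB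
        exact hB.2 (hW.superset H' hH' B hHB hB.1)
  · ext A
    constructor
    · rintro ⟨hsub, hna⟩
      refine ⟨hsub, fun hAT => hna ?_⟩
      intro a ha
      obtain ⟨H, hHT, hHA, hhom⟩ := hW.homog A hAT a ha
      exact ⟨H, hHA, fun hHI => hHI.2 hHT, hhom⟩
    · rintro ⟨hsub, hAnT⟩
      refine ⟨hsub, fun hall => hAnT ?_⟩
      -- build a witnessing class containing A
      have hall' : ∀ a, IsList A a → ∃ H, H ⊆ A ∧
          (H ∈ {S | ∃ 𝒮, WitnessingClass κ 𝒮 ∧ S ∈ 𝒮}) ∧ Homog a H := by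
        intro a haA
        obtain ⟨H, hHA, hHI, hhom⟩ := hall a haA
        refine ⟨H, hHA, ?_, hhom⟩
        by_contra hHT
        exact hHI ⟨hHA.trans hsub, hHT⟩
      set 𝒮' : Set (Set Ordinal) :=
        {S | ∃ 𝒮, WitnessingClass κ 𝒮 ∧ S ∈ 𝒮} ∪ {S | A ⊆ S ∧ S ⊆ Set.Iio κ}
        with h𝒮'def
      have hAstat : StatIn κ A := by
        obtain ⟨H, hHA, hHT, _⟩ := hall' (fun _ => ∅) (fun α _ => empty_subset _)
        refine ⟨hsub, fun C hC => ?_⟩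
        obtain ⟨x, hxH, hxC⟩ := (hW.stat H hHT).2 C hC
        exact ⟨x, hHA hxH, hxC⟩
      have h𝒮' : WitnessingClass κ 𝒮' := by
        constructor
        · rintro S (hS | ⟨hAS, hSsub⟩)
          · exact hW.stat S hS
          · exact ⟨hSsub, fun C hC => by
              obtain ⟨x, hxA, hxC⟩ := hAstat.2 C hC
              exact ⟨x, hAS hxA, hxC⟩⟩
        · rintro S (hS | ⟨hAS, _⟩) T hST hT
          · exact Or.inl (hW.superset S hS T hST hT)
          · exact Or.inr ⟨hAS.trans hST, hT⟩
        · rintro S (hS | ⟨hAS, _⟩) a haS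
          · obtain ⟨H, hHT, hHS, hhom⟩ := hW.homog S hS a haS
            exact ⟨H, Or.inl hHT, hHS, hhom⟩
          · obtain ⟨H, hHA, hHT, hhom⟩ := hall' a (fun α hα => haS α (hAS hα))
            exact ⟨H, Or.inl hHT, hHA.trans hAS, hhom⟩
      exact ⟨𝒮', h𝒮', Or.inr ⟨subset_rfl, hsub⟩⟩
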